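/- Let p be an odd prime, n \ge 1, S coprime to p, and a,b,c integers with gcd(a,b,c)=1, a \equiv p^\alpha A (mod p^n) with p \nmid A and 0 \le \alpha \le n (taking \alpha=n, A=1 if p^n | a), and p^\alpha | c. Then the double Gauss sum satisfies G(a,b,c;S;p^n) = G(SA;p^{n-\alpha}) \cdot G(SA\Delta;p^{n+\alpha}), where \Delta = 4ac-b^2. -/

import Mathlib

/-!
Write `m = n - α` and split `x = u + p^m v`. As `p^α ∣ a` modulo `p^n`, the phase is linear in
`v`, and orthogonality of additive characters, with `gcd(p^α, S b) = 1`, forces `p^α ∣ y`.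
Substituting `y = p^α z` leaves `p^α` times a double sum modulo `p^m` with unit
`x²`-coefficient `A`, which completing the square `4A·Q(x,z) = (2Ax + bz)² + Δ' z²` factors into
`G(SA; p^m) · G(SAΔ'; p^m)`. Finally `p^α G(T; p^m) = G(T; p^(m+2α))` when `p ∤ 2T`, by the same
splitting, and `Δ' ≡ Δ` modulo `p^(n+α)`.
-/

open Finset

noncomputable def Gsum (S : ℤ) (k : ℕ) : ℂ :=
  ∑ x ∈ Finset.range k,
    Complex.exp (2 * Real.pi * Complex.I * ((S * (x : ℤ) ^ 2 : ℤ) : ℂ) / (k : ℂ))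

noncomputable def Gsum2 (a b c S : ℤ) (k : ℕ) : ℂ :=
  ∑ x ∈ Finset.range k, ∑ y ∈ Finset.range k,
    Complex.exp (2 * Real.pi * Complex.I *
      ((S * (a * (x : ℤ) ^ 2 + b * (x : ℤ) * (y : ℤ) + c * (y : ℤ) ^ 2) : ℤ) : ℂ) / (k : ℂ))

noncomputable def expFrac (k : ℕ) (m : ℤ) : ℂ :=
  Complex.exp (2 * Real.pi * Complex.I * (m : ℂ) / (k : ℂ))

section expFrac

variable {k : ℕ}

lemma expFrac_add (m m' : ℤ) : expFrac k (m + m') = expFrac k m * expFrac k m' := by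
  simp only [expFrac, ← Complex.exp_add]
  congr 1
  push_cast
  ring

lemma expFrac_mul_right (k d : ℕ) [NeZero d] (m : ℤ) :
    expFrac (k * d) (m * d) = expFrac k m := by
  simp only [expFrac]
  push_cast
  rw [← mul_assoc, mul_div_mul_right _ _ (NeZero.ne (d : ℂ))]

lemma expFrac_mul_add_mul (N : ℕ) [NeZero N] (m j : ℤ) :
    expFrac (N * k) (m + N * j) = expFrac (N * k) m * expFrac k j := by
  rw [expFrac_add, mul_comm (N : ℤ), mul_comm N, expFrac_mul_right]

variable [NeZero k]

lemma expFrac_eq_stdAddChar (m : ℤ) : expFrac k m = ZMod.stdAddChar (m : ZMod k) :=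
  (ZMod.stdAddChar_coe m).symm

lemma expFrac_congr {m m' : ℤ} (h : m ≡ m' [ZMOD k]) : expFrac k m = expFrac k m' := by
  rw [expFrac_eq_stdAddChar, expFrac_eq_stdAddChar, (ZMod.intCast_eq_intCast_iff _ _ _).2 h]

lemma sum_range_eq_sum_zmod (F : ZMod k → ℂ) : ∑ x ∈ range k, F x = ∑ y, F y := by
  refine sum_nbij' (fun x => (x : ZMod k)) ZMod.val (fun _ _ => mem_univ _)
    (fun y _ => mem_range.2 (ZMod.val_lt y)) (fun x hx => ZMod.val_cast_of_lt (mem_range.1 hx))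
    (fun y _ => ZMod.natCast_zmod_val y) (fun _ _ => rfl)

lemma sum_range_expFrac_mul (c : ℤ) :
    ∑ t ∈ range k, expFrac k (c * t) = if (k : ℤ) ∣ c then (k : ℂ) else 0 := by
  have h := AddChar.sum_mulShift (c : ZMod k) (ZMod.isPrimitive_stdAddChar k)
  rw [← sum_range_eq_sum_zmod] at h
  simp only [expFrac_eq_stdAddChar]
  push_cast
  simp_rw [mul_comm (c : ZMod k), h, ZMod.intCast_zmod_eq_zero_iff_dvd, ZMod.card]
  split_ifs <;> simp

lemma Function.Periodic.sum_range_comp_affine {f : ℤ → ℂ} (hf : Function.Periodic f k)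
    {v : ℤ} (hv : IsCoprime v k) (w : ℤ) :
    ∑ x ∈ range k, f (v * x + w) = ∑ x ∈ range k, f x := by
  set F : ZMod k → ℂ := fun y => f y.val
  have hfF : ∀ m : ℤ, f m = F m := fun m => by
    simp only [F, ZMod.val_intCast, Int.emod_def, mul_comm (k : ℤ)]
    exact (hf.sub_int_mul_eq _).symm
  obtain ⟨u, hu⟩ := (ZMod.coe_int_isUnit_iff_isCoprime v k).2 hv.symm
  calc ∑ x ∈ range k, f (v * x + w) = ∑ y : ZMod k, F (u * y + w) := by
        rw [← sum_range_eq_sum_zmod, hu]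
        push_cast [hfF]
        rfl
    _ = ∑ y : ZMod k, F y :=
        Fintype.sum_equiv ((u.mulLeft).trans (Equiv.addRight (w : ZMod k))) _ _
          (fun y => by simp [hu])
    _ = ∑ x ∈ range k, f x := by
        simp only [hfF]; push_cast; exact (sum_range_eq_sum_zmod F).symm

end expFrac

lemma sum_range_mul_eq_sum_sum (N K : ℕ) (f : ℕ → ℂ) :
    ∑ x ∈ range (N * K), f x = ∑ u ∈ range N, ∑ v ∈ range K, f (u + N * v) := by
  rw [mul_comm, sum_range, ← finProdFinEquiv.sum_comp, Fintype.sum_prod_type, sum_comm,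
    sum_range]
  simp only [finProdFinEquiv_apply_val, sum_range]

lemma sum_range_mul_ite_dvd (M K : ℕ) [NeZero K] (g : ℕ → ℂ) :
    ∑ y ∈ range (M * K), (if K ∣ y then g y else 0) = ∑ z ∈ range M, g (K * z) := by
  rw [mul_comm, sum_range_mul_eq_sum_sum, sum_eq_single_of_mem 0 (mem_range.2 (NeZero.pos K))]
  · simp
  · intro u hu hu0
    refine sum_eq_zero fun v _ => if_neg fun hdvd => hu0 ?_
    exact Nat.eq_zero_of_dvd_of_lt ((Nat.dvd_add_left (dvd_mul_right K v)).1 hdvd)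
      (mem_range.1 hu)

-- Writing `x = u + N v`, the phase is linear in `v`, so the sum over `v` keeps only the `u`
-- with `K ∣ L u`.
lemma sum_range_mul_expFrac_of_modEq (N K : ℕ) [NeZero N] [NeZero K] (Φ L : ℕ → ℤ)
    (hΦ : ∀ u v : ℕ, Φ (u + N * v) ≡ Φ u + N * (L u * v) [ZMOD (N * K : ℕ)]) :
    ∑ x ∈ range (N * K), expFrac (N * K) (Φ x)
      = ∑ u ∈ range N, if (K : ℤ) ∣ L u then K * expFrac (N * K) (Φ u) else 0 := by
  rw [sum_range_mul_eq_sum_sum]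
  refine sum_congr rfl fun u _ => ?_
  simp_rw [expFrac_congr (hΦ u _), expFrac_mul_add_mul, ← mul_sum, sum_range_expFrac_mul]
  split_ifs <;> ring

lemma Gsum_eq_sum_expFrac (T : ℤ) (k : ℕ) :
    Gsum T k = ∑ x ∈ range k, expFrac k (T * (x : ℤ) ^ 2) := rfl

lemma Gsum2_eq_sum_expFrac (a b c S : ℤ) (k : ℕ) :
    Gsum2 a b c S k = ∑ x ∈ range k, ∑ y ∈ range k,
      expFrac k (S * (a * (x : ℤ) ^ 2 + b * (x : ℤ) * (y : ℤ) + c * (y : ℤ) ^ 2)) := rfl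

section GaussSums

variable {k : ℕ} [NeZero k]

lemma Gsum_congr {T T' : ℤ} (h : T ≡ T' [ZMOD k]) : Gsum T k = Gsum T' k :=
  sum_congr rfl fun x _ => expFrac_congr (by gcongr)

lemma Gsum2_congr_left {a a' : ℤ} (b c S : ℤ) (h : a ≡ a' [ZMOD k]) :
    Gsum2 a b c S k = Gsum2 a' b c S k :=
  sum_congr rfl fun x _ => sum_congr rfl fun y _ => expFrac_congr (by gcongr)

lemma sum_range_expFrac_sq_affine (T : ℤ) {v : ℤ} (hv : IsCoprime v k) (w : ℤ) :
    ∑ x ∈ range k, expFrac k (T * (v * x + w) ^ 2) = Gsum T k := by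
  have hper : Function.Periodic (fun x : ℤ => expFrac k (T * x ^ 2)) k := fun x =>
    expFrac_congr (Int.modEq_iff_dvd.2 ⟨-(T * (2 * x + k)), by ring⟩)
  exact hper.sum_range_comp_affine hv w

lemma Gsum_mul_sq (T : ℤ) {v : ℤ} (hv : IsCoprime v k) : Gsum (T * v ^ 2) k = Gsum T k := by
  rw [← sum_range_expFrac_sq_affine T hv 0, Gsum_eq_sum_expFrac]
  simp_rw [add_zero, mul_pow, mul_assoc]

end GaussSums

lemma IsCoprime.dvd_mul_left_iff {x y z : ℤ} (h : IsCoprime x y) : x ∣ y * z ↔ x ∣ z :=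
  ⟨h.dvd_of_dvd_mul_left, fun hz => dvd_mul_of_dvd_right hz y⟩

lemma Gsum_modulus_mul_sq (T : ℤ) (M K : ℕ) [NeZero M] [NeZero K]
    (hK : IsCoprime (K : ℤ) (2 * T)) : Gsum T (M * K ^ 2) = K * Gsum T M := by
  have hsplit := sum_range_mul_expFrac_of_modEq (M * K) K (fun x => T * (x : ℤ) ^ 2)
    (fun u => 2 * T * u) fun u v => Int.modEq_iff_dvd.2 ⟨-(T * M * v ^ 2), by push_cast; ring⟩
  simp_rw [hK.dvd_mul_left_iff, Int.natCast_dvd_natCast] at hsplit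
  rw [Gsum_eq_sum_expFrac, sq, ← mul_assoc, hsplit, sum_range_mul_ite_dvd,
    Gsum_eq_sum_expFrac, mul_sum]
  refine sum_congr rfl fun z _ => ?_
  rw [← expFrac_mul_right M (K * K), ← mul_assoc]
  push_cast
  ring_nf

lemma Gsum2_mul_mul_modulus (A b C S : ℤ) (M K : ℕ) [NeZero M] [NeZero K]
    (hK : IsCoprime (K : ℤ) (S * b)) :
    Gsum2 (K * A) b (K * C) S (M * K) = K * Gsum2 A b (K ^ 2 * C) S M := by
  have hrow : ∀ y : ℕ,
      ∑ x ∈ range (M * K), expFrac (M * K) (S * (K * A * (x : ℤ) ^ 2 + b * x * y + K * C * y ^ 2))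
        = if K ∣ y then
            K * ∑ u ∈ range M, expFrac (M * K) (S * (K * A * (u : ℤ) ^ 2 + b * u * y + K * C * y ^ 2))
          else 0 := by
    intro y
    rw [sum_range_mul_expFrac_of_modEq M K _ (fun _ => S * b * y) fun u v =>
      Int.modEq_iff_dvd.2 ⟨-(S * A * (2 * u * v + M * v ^ 2)), by push_cast; ring⟩]
    simp_rw [hK.dvd_mul_left_iff, Int.natCast_dvd_natCast, sum_ite_irrel, sum_const_zero, mul_sum]
  rw [Gsum2_eq_sum_expFrac, sum_comm]
  simp_rw [hrow]
  rw [sum_range_mul_ite_dvd, Gsum2_eq_sum_expFrac, sum_comm, mul_sum]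
  refine sum_congr rfl fun z _ => congrArg _ (sum_congr rfl fun u _ => ?_)
  rw [← expFrac_mul_right M K]
  push_cast
  ring_nf

lemma Gsum2_eq_Gsum_mul_Gsum {k : ℕ} [NeZero k] (A b C S : ℤ) (hA : IsCoprime (2 * A) k) :
    Gsum2 A b C S k = Gsum (S * A) k * Gsum (S * A * (4 * A * C - b ^ 2)) k := by
  obtain ⟨A', t, hA'⟩ : IsCoprime (4 * A) k := by
    rw [show 4 * A = 2 * (2 * A) by ring]
    exact hA.of_mul_left_left.mul_left hA
  have hinv : ∀ T, Gsum (S * A' * T) k = Gsum (S * A * T) k := fun T =>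
    (Gsum_mul_sq _ hA).symm.trans <| Gsum_congr <| Int.modEq_iff_dvd.2
      ⟨S * A * T * t, by linear_combination (-(S * A * T)) * hA'⟩
  have hsquare : ∀ x y : ℕ,
      expFrac k (S * (A * (x : ℤ) ^ 2 + b * x * y + C * y ^ 2))
        = expFrac k (S * A' * (2 * A * x + b * y) ^ 2)
          * expFrac k (S * A' * (4 * A * C - b ^ 2) * (y : ℤ) ^ 2) := fun x y => by
    rw [← expFrac_add]
    exact expFrac_congr <| Int.modEq_iff_dvd.2 ⟨-(S * (A * x ^ 2 + b * x * y + C * y ^ 2) * t),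
      by linear_combination (S * (A * x ^ 2 + b * x * y + C * y ^ 2)) * hA'⟩
  simp_rw [Gsum2_eq_sum_expFrac, hsquare]
  rw [sum_comm]
  simp_rw [← sum_mul, sum_range_expFrac_sq_affine _ hA, ← mul_sum]
  rw [← Gsum_eq_sum_expFrac, hinv, show Gsum (S * A') k = Gsum (S * A) k by simpa using hinv 1]

lemma Gsum2_mul_mul_eq_Gsum_mul_Gsum (A b C S : ℤ) (M K : ℕ) [NeZero M] [NeZero K]
    (hA : IsCoprime (2 * A) M) (hKS : IsCoprime (K : ℤ) S) (hKA : IsCoprime (K : ℤ) (2 * A))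
    (hKb : IsCoprime (K : ℤ) b) :
    Gsum2 (K * A) b (K * C) S (M * K)
      = Gsum (S * A) M * Gsum (S * A * (4 * A * (K ^ 2 * C) - b ^ 2)) (M * K ^ 2) := by
  have hKΔ : IsCoprime (K : ℤ) (2 * (S * A * (4 * A * (K ^ 2 * C) - b ^ 2))) := by
    convert hKA.mul_right (hKS.mul_right
      ((hKb.pow_right (n := 2)).neg_right.add_mul_left_right (4 * A * K * C))) using 1
    ring
  rw [Gsum2_mul_mul_modulus _ _ _ _ _ _ (hKS.mul_right hKb), Gsum2_eq_Gsum_mul_Gsum _ _ _ _ hA,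
    Gsum_modulus_mul_sq _ _ _ hKΔ]
  ring

lemma Int.isCoprime_of_dvd_of_dvd_of_gcd_eq_one {a b c d : ℤ} (hda : d ∣ a) (hdc : d ∣ c)
    (h : Int.gcd (Int.gcd a b) c = 1) : IsCoprime d b := by
  rw [Int.isCoprime_iff_gcd_eq_one, ← Nat.dvd_one, ← h, ← Int.natCast_dvd_natCast]
  exact Int.dvd_coe_gcd (Int.dvd_coe_gcd ((Int.gcd_dvd_left ..).trans hda) (Int.gcd_dvd_right ..))
    ((Int.gcd_dvd_left ..).trans hdc)

lemma Nat.Prime.isCoprime_two_mul {p : ℕ} (hp : p.Prime) (hodd : p ≠ 2) {A : ℤ}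
    (hA : ¬ (p : ℤ) ∣ A) : IsCoprime (p : ℤ) (2 * A) := by
  have hpZ : _root_.Prime (p : ℤ) := Nat.prime_iff_prime_int.1 hp
  refine (hpZ.coprime_iff_not_dvd.2 fun h2 => hodd ?_).mul_right (hpZ.coprime_iff_not_dvd.2 hA)
  exact (Nat.prime_dvd_prime_iff_eq hp Nat.prime_two).1 (by exact_mod_cast h2)

theorem stmt_14_general (p : ℕ) (hp : p.Prime) (hodd : p ≠ 2) (n : ℕ)
    (S a b c A : ℤ) (α : ℕ) (hα : α ≤ n)
    (hS : IsCoprime S (p : ℤ)) (habc : Int.gcd (Int.gcd a b) c = 1)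
    (hA : ¬ (p : ℤ) ∣ A) (ha : a ≡ (p : ℤ) ^ α * A [ZMOD ((p : ℤ) ^ n)])
    (hc : (p : ℤ) ^ α ∣ c) :
    Gsum2 a b c S (p ^ n) =
      Gsum (S * A) (p ^ (n - α)) * Gsum (S * A * (4 * a * c - b ^ 2)) (p ^ (n + α)) := by
  have : NeZero p := ⟨hp.ne_zero⟩
  obtain ⟨C, rfl⟩ := hc
  obtain ⟨m, rfl⟩ := Nat.exists_eq_add_of_le' hα
  obtain ⟨s, hs⟩ := ha.dvd
  have hp2A := hp.isCoprime_two_mul hodd hA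
  have hb : IsCoprime ((p : ℤ) ^ α) b := Int.isCoprime_of_dvd_of_dvd_of_gcd_eq_one
    ⟨A - p ^ m * s, by linear_combination -hs⟩ (dvd_mul_right _ _) habc
  rw [Nat.add_sub_cancel]
  calc Gsum2 a b (p ^ α * C) S (p ^ (m + α))
      = Gsum2 ((p ^ α : ℕ) * A) b ((p ^ α : ℕ) * C) S (p ^ m * p ^ α) := by
        rw [← pow_add]; push_cast; exact Gsum2_congr_left _ _ _ (by exact_mod_cast ha)
    _ = Gsum (S * A) (p ^ m)
          * Gsum (S * A * (4 * A * ((p ^ α : ℕ) ^ 2 * C) - b ^ 2)) (p ^ m * (p ^ α) ^ 2) :=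
        Gsum2_mul_mul_eq_Gsum_mul_Gsum _ _ _ _ _ _ (by push_cast; exact hp2A.symm.pow_right)
          (by push_cast; exact hS.symm.pow_left) (by push_cast; exact hp2A.pow_left)
          (by push_cast; exact hb)
    _ = Gsum (S * A) (p ^ m) * Gsum (S * A * (4 * a * (p ^ α * C) - b ^ 2)) (p ^ (m + α + α)) := by
        rw [← pow_mul, ← pow_add, show m + α * 2 = m + α + α by ring]
        refine congrArg _ (Gsum_congr (Int.modEq_iff_dvd.2 ⟨-(4 * S * A * C * s), ?_⟩))
        push_cast
        linear_combination (-(4 * S * A * C * p ^ α)) * hs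

theorem stmt_14 (p : ℕ) (hp : p.Prime) (hodd : p ≠ 2) (n : ℕ) (hn : 0 < n)
    (S a b c A : ℤ) (α : ℕ) (hα : α ≤ n)
    (hS : IsCoprime S (p : ℤ)) (habc : Int.gcd (Int.gcd a b) c = 1)
    (hA : ¬ (p : ℤ) ∣ A) (ha : a ≡ (p : ℤ) ^ α * A [ZMOD ((p : ℤ) ^ n)])
    (hAone : α = n → A = 1)
    (hc : (p : ℤ) ^ α ∣ c) :
    Gsum2 a b c S (p ^ n) =
      Gsum (S * A) (p ^ (n - α)) * Gsum (S * A * (4 * a * c - b ^ 2)) (p ^ (n + α)) :=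
  stmt_14_general p hp hodd n S a b c A α hα hS habc hA ha hc
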